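/- Let p be a prime, f ∈ ℤ_p[X] monic and irreducible with root α, 𝕂 = ℚ_p(α), w the unique extension of ν_p to 𝕂, and φ ∈ ℤ_p[X] a monic polynomial whose reduction mod p is irreducible and such that f̄ is a power of φ̄. Then for every P ∈ ℤ_p[X], w(P(α)) ≥ ν_p(P), with equality if and only if φ̄ does not divide the reduction of P/p^v mod p, where v = ν_p(P) is the Gauss valuation of P. -/

import Mathlib

open Polynomial

/-- The `p`-adic Gauss valuation of a polynomial over `ℤ_[p]`. -/
noncomputable def gaussVal (p : ℕ) [Fact p.Prime] (P : Polynomial ℤ_[p]) : ℕ∞ :=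
  ⨅ i ∈ P.support, (((P.coeff i : ℚ_[p]).valuation).toNat : ℕ∞)

/-!
Since `f` is monic with `p`-integral coefficients, `w α ≥ 0`; hence `w (R(α)) ≥ 0` for every
`R ∈ ℤ_p[X]`, with strict inequality as soon as `R̄ = 0`, and therefore also as soon as `R̄` is
divisible by the reduction of some `S` with `w (S(α)) > 0`. Applied to `S = f` and `R = φ^l`
this gives `w (φ(α)) > 0`, so `φ̄ ∣ Q̄` forces `w (Q(α)) > 0`. If `φ̄ ∤ Q̄`, then `φ̄` and `Q̄`
are coprime, so `B̄ Q̄ ≡ 1 mod φ̄` for some `B`, which makes `B(α) Q(α)` a unit of the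
valuation ring and `w (Q(α)) = 0`. Finally `w (P(α)) = v + w (Q(α))`.
-/

namespace AddValuation

variable {A K Γ : Type*} [CommRing A] [Field K] [LinearOrderedAddCommGroupWithTop Γ]
  (w : AddValuation K Γ) {ι : A →+* K}

theorem nonneg_eval₂ (hA : ∀ a, 0 ≤ w (ι a)) {x : K} (hx : 0 ≤ w x) (R : A[X]) :
    0 ≤ w (R.eval₂ ι x) := by
  rw [eval₂_eq_sum_range]
  refine w.map_le_sum fun i _ => ?_
  rw [w.map_mul, w.map_pow]
  exact add_nonneg (hA _) (nsmul_nonneg hx i)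

theorem nonneg_of_eval₂_eq_zero (hA : ∀ a, 0 ≤ w (ι a)) {f : A[X]} (hf : f.Monic) {x : K}
    (hx : f.eval₂ ι x = 0) : 0 ≤ w x := by
  by_contra! hneg
  have hx0 : x ≠ 0 := by rintro rfl; simp at hneg
  have : Invertible x := invertibleOfNonzero hx0
  have hinv : 0 < w (⅟x) := by
    have h1 : w (⅟x) + w x = 0 := by rw [← w.map_mul, invOf_mul_self, w.map_one]
    by_contra! h
    have := add_le_add_left h (w x)
    rw [h1, zero_add] at this
    exact hneg.not_ge this
  -- `⅟x` is a root of `reverse f = g * X + 1`, and `g * X` is positive at `⅟x`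
  have hrev : eval₂ ι (⅟x) (f.reverse.divX * X + C 1) = 0 := by
    rw [← hf.leadingCoeff, ← coeff_zero_reverse, divX_mul_X_add]
    exact (eval₂_reverse_eq_zero_iff ι x f).mpr hx
  rw [eval₂_add, eval₂_mul, eval₂_X, eval₂_C, _root_.map_one, add_eq_zero_iff_eq_neg'] at hrev
  have hpos : 0 < w (f.reverse.divX.eval₂ ι (⅟x) * ⅟x) := by
    rw [w.map_mul, add_comm]
    exact add_pos_of_pos_of_nonneg hinv (w.nonneg_eval₂ hA hinv.le _)
  have h1 := congrArg w hrev
  rw [w.map_one, w.map_neg] at h1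
  exact hpos.ne h1

section Reduction

variable {k : Type*} [CommRing k] {red : A →+* k} {x : K}

theorem pos_eval₂_of_map_eq_zero (hker : ∀ a, red a = 0 → 0 < w (ι a))
    (hx : 0 ≤ w x) {R : A[X]} (hR : R.map red = 0) : 0 < w (R.eval₂ ι x) := by
  rw [eval₂_eq_sum_range]
  refine w.map_lt_sum (by simp) fun i _ => ?_
  rw [w.map_mul, w.map_pow]
  refine add_pos_of_pos_of_nonneg (hker _ ?_) (nsmul_nonneg hx i)
  rw [← coeff_map, hR, coeff_zero]

theorem pos_eval₂_of_map_dvd (hred : Function.Surjective red) (hA : ∀ a, 0 ≤ w (ι a))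
    (hker : ∀ a, red a = 0 → 0 < w (ι a)) (hx : 0 ≤ w x) {R S : A[X]}
    (hS : 0 < w (S.eval₂ ι x)) (hSR : S.map red ∣ R.map red) : 0 < w (R.eval₂ ι x) := by
  obtain ⟨_, hT⟩ := hSR
  obtain ⟨T, rfl⟩ := map_surjective red hred ‹_›
  have hRST : (R - S * T).map red = 0 := by
    rw [Polynomial.map_sub, Polynomial.map_mul, hT, sub_self]
  have hsplit : R.eval₂ ι x = (R - S * T).eval₂ ι x + S.eval₂ ι x * T.eval₂ ι x := by
    rw [eval₂_sub, eval₂_mul]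
    ring
  rw [hsplit]
  refine w.map_lt_add (w.pos_eval₂_of_map_eq_zero hker hx hRST) ?_
  rw [w.map_mul]
  exact add_pos_of_pos_of_nonneg hS (w.nonneg_eval₂ hA hx T)

theorem pos_eval₂_of_map_eq_pow (hred : Function.Surjective red) (hA : ∀ a, 0 ≤ w (ι a))
    (hker : ∀ a, red a = 0 → 0 < w (ι a)) (hx : 0 ≤ w x) {f φ : A[X]} {l : ℕ}
    (hf : f.eval₂ ι x = 0) (hfφ : f.map red = φ.map red ^ l) : 0 < w (φ.eval₂ ι x) := by
  have hφl := w.pos_eval₂_of_map_dvd hred hA hker hx (S := f) (R := φ ^ l) (by simp [hf])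
    (by rw [hfφ, Polynomial.map_pow])
  rw [eval₂_pow, w.map_pow] at hφl
  refine (w.nonneg_eval₂ hA hx φ).lt_of_ne fun h0 => ?_
  rw [← h0, smul_zero] at hφl
  exact hφl.false

end Reduction

theorem eval₂_eq_zero_iff_not_dvd {k : Type*} [Field k] {red : A →+* k} {x : K}
    (hred : Function.Surjective red) (hA : ∀ a, 0 ≤ w (ι a))
    (hker : ∀ a, red a = 0 → 0 < w (ι a)) (hx : 0 ≤ w x) {φ : A[X]}
    (hφ : 0 < w (φ.eval₂ ι x)) (hirr : Irreducible (φ.map red)) (Q : A[X]) :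
    w (Q.eval₂ ι x) = 0 ↔ ¬ φ.map red ∣ Q.map red := by
  refine ⟨fun hQ hdvd => (w.pos_eval₂_of_map_dvd hred hA hker hx hφ hdvd).ne' hQ, fun hndvd => ?_⟩
  obtain ⟨a, b, hab⟩ := hirr.coprime_iff_not_dvd.mpr hndvd
  obtain ⟨B, rfl⟩ := map_surjective red hred b
  -- `B` inverts `Q` modulo `φ`, so `B Q` is a unit at `x`
  have hBQ : 0 < w ((1 - B * Q).eval₂ ι x) := by
    refine w.pos_eval₂_of_map_dvd hred hA hker hx hφ ⟨a, ?_⟩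
    rw [Polynomial.map_sub, Polynomial.map_mul, Polynomial.map_one, ← hab]
    ring
  have hBQ1 : w ((B * Q).eval₂ ι x) = 0 := by
    rw [← w.map_one]
    refine w.map_eq_of_lt_sub ?_
    rwa [w.map_one, w.map_sub_swap, ← eval₂_one ι x, ← eval₂_sub]
  rw [eval₂_mul, w.map_mul] at hBQ1
  exact ((add_eq_zero_iff_of_nonneg (w.nonneg_eval₂ hA hx B) (w.nonneg_eval₂ hA hx Q)).mp hBQ1).2

def ExtendsPadicValuation (p : ℕ) [Fact p.Prime] {K : Type*} [Field K] [Algebra ℚ_[p] K]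
    (w : AddValuation K (WithTop ℚ)) : Prop :=
  ∀ x : ℚ_[p], x ≠ 0 → w (algebraMap ℚ_[p] K x) = ((x.valuation : ℚ) : WithTop ℚ)

namespace ExtendsPadicValuation

variable {p : ℕ} [Fact p.Prime] {K : Type*} [Field K] [Algebra ℚ_[p] K]
  {w : AddValuation K (WithTop ℚ)}

theorem nonneg_padicInt (hw : w.ExtendsPadicValuation p) (a : ℤ_[p]) :
    0 ≤ w (algebraMap ℚ_[p] K a) := by
  rcases eq_or_ne (a : ℚ_[p]) 0 with ha | ha
  · simp [ha]
  · rw [hw _ ha]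
    exact_mod_cast Nat.zero_le _

theorem map_p (hw : w.ExtendsPadicValuation p) : w (p : K) = 1 := by
  rw [← map_natCast (algebraMap ℚ_[p] K),
    hw _ (Nat.cast_ne_zero.mpr (Fact.out : p.Prime).ne_zero), Padic.valuation_p]
  rfl

theorem pos_of_toZMod_eq_zero (hw : w.ExtendsPadicValuation p) {a : ℤ_[p]}
    (ha : PadicInt.toZMod a = 0) : 0 < w (algebraMap ℚ_[p] K a) := by
  rw [← RingHom.mem_ker, PadicInt.ker_toZMod, PadicInt.maximalIdeal_eq_span_p,
    Ideal.mem_span_singleton] at ha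
  obtain ⟨d, rfl⟩ := ha
  rw [PadicInt.coe_mul, _root_.map_mul, w.map_mul, PadicInt.coe_natCast, map_natCast, hw.map_p]
  exact add_pos_of_pos_of_nonneg one_pos (hw.nonneg_padicInt d)

end ExtendsPadicValuation

end AddValuation

theorem valuation_ge_gaussVal_general (p : ℕ) [Fact p.Prime]
    (f φ : Polynomial ℤ_[p]) (hf : f.Monic)
    (hφirr : Irreducible (φ.map (PadicInt.toZMod (p := p))))
    (l : ℕ)
    (hfbar : f.map (PadicInt.toZMod (p := p)) = (φ.map (PadicInt.toZMod (p := p))) ^ l)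
    (K : Type*) [Field K] [Algebra ℚ_[p] K]
    (α : K) (hroot : Polynomial.aeval α (f.map (PadicInt.Coe.ringHom (p := p))) = 0)
    -- w is a valuation of K extending ν_p
    (w : AddValuation K (WithTop ℚ))
    (hw : ∀ x : ℚ_[p], x ≠ 0 →
      w (algebraMap ℚ_[p] K x) = ((x.valuation : ℚ) : WithTop ℚ)) :
    ∀ (P Q : Polynomial ℤ_[p]) (v : ℕ),
      gaussVal p P = (v : ℕ∞) →
      P = Polynomial.C ((p : ℤ_[p]) ^ v) * Q →
      ((v : ℚ) : WithTop ℚ) ≤ w (Polynomial.aeval α (P.map (PadicInt.Coe.ringHom (p := p)))) ∧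
      (w (Polynomial.aeval α (P.map (PadicInt.Coe.ringHom (p := p)))) = ((v : ℚ) : WithTop ℚ)
        ↔ ¬ (φ.map (PadicInt.toZMod (p := p)) ∣ Q.map (PadicInt.toZMod (p := p)))) := by
  set ι := (algebraMap ℚ_[p] K).comp (PadicInt.Coe.ringHom (p := p))
  have heval (R : ℤ_[p][X]) : aeval α (R.map PadicInt.Coe.ringHom) = R.eval₂ ι α := by
    rw [aeval_def, eval₂_map]
  have hw' : w.ExtendsPadicValuation p := hw
  have hA (a : ℤ_[p]) : 0 ≤ w (ι a) := hw'.nonneg_padicInt a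
  have hker (a : ℤ_[p]) (ha : PadicInt.toZMod a = 0) : 0 < w (ι a) := hw'.pos_of_toZMod_eq_zero ha
  have hred : Function.Surjective (PadicInt.toZMod (p := p)) := ZMod.ringHom_surjective _
  have hα : 0 ≤ w α := w.nonneg_of_eval₂_eq_zero hA hf (by rwa [← heval])
  have hφ : 0 < w (φ.eval₂ ι α) :=
    w.pos_eval₂_of_map_eq_pow hred hA hker hα (by rwa [← heval]) hfbar
  intro P Q v _ hPQ
  have hP : w (aeval α (P.map PadicInt.Coe.ringHom)) = v + w (Q.eval₂ ι α) := by
    rw [heval, hPQ, eval₂_mul, eval₂_C, w.map_mul, map_pow, map_natCast, w.map_pow, hw'.map_p]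
    simp
  rw [hP, ← w.eval₂_eq_zero_iff_not_dvd hred hA hker hα hφ hφirr Q]
  refine ⟨le_add_of_nonneg_right (w.nonneg_eval₂ hA hα Q), ?_⟩
  simp

/-- Let `f ∈ ℤ_p[X]` be monic and irreducible over `ℚ_p` with root `α` generating
`𝕂 = ℚ_p(α)`, let `w` be the (unique) valuation of `𝕂` extending `ν_p`, and let `φ` be
monic with irreducible reduction such that `f̄` is a power of `φ̄`.  Then for every
`P ∈ ℤ_p[X]` with Gauss valuation `v` and `P = p^v·Q`, one has `w(P(α)) ≥ ν_p(P)`, with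
equality iff `φ̄` does not divide `Q̄ = (P/p^v)‾` mod `p`. -/
theorem valuation_ge_gaussVal (p : ℕ) [Fact p.Prime]
    (f φ : Polynomial ℤ_[p]) (hf : f.Monic) (hφ : φ.Monic)
    (hirr : Irreducible (f.map (PadicInt.Coe.ringHom (p := p))))
    (hφirr : Irreducible (φ.map (PadicInt.toZMod (p := p))))
    (l : ℕ)
    (hfbar : f.map (PadicInt.toZMod (p := p)) = (φ.map (PadicInt.toZMod (p := p))) ^ l)
    (K : Type*) [Field K] [Algebra ℚ_[p] K]
    (α : K) (hroot : Polynomial.aeval α (f.map (PadicInt.Coe.ringHom (p := p))) = 0)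
    (hgen : Algebra.adjoin ℚ_[p] ({α} : Set K) = ⊤)
    -- w is a valuation of K extending ν_p
    (w : AddValuation K (WithTop ℚ))
    (hw : ∀ x : ℚ_[p], x ≠ 0 →
      w (algebraMap ℚ_[p] K x) = ((x.valuation : ℚ) : WithTop ℚ)) :
    ∀ (P Q : Polynomial ℤ_[p]) (v : ℕ),
      gaussVal p P = (v : ℕ∞) →
      P = Polynomial.C ((p : ℤ_[p]) ^ v) * Q →
      ((v : ℚ) : WithTop ℚ) ≤ w (Polynomial.aeval α (P.map (PadicInt.Coe.ringHom (p := p)))) ∧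
      (w (Polynomial.aeval α (P.map (PadicInt.Coe.ringHom (p := p)))) = ((v : ℚ) : WithTop ℚ)
        ↔ ¬ (φ.map (PadicInt.toZMod (p := p)) ∣ Q.map (PadicInt.toZMod (p := p)))) :=
  valuation_ge_gaussVal_general p f φ hf hφirr l hfbar K α hroot w hw
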